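/- arXiv:math/0306283 — 4 statements merged into one kernel-verified Lean document; each statement's English description precedes it below -/
import Mathlib

section
/- Let L(x) = -π²/6 - (1/2)∫_0^x (log(t)/(1-t) + log(1-t)/t) dt be the Rogers dilogarithm on the cut plane ℂ \ ((-∞,0] ∪ [1,∞)). For real x, y with 0 < y < x < 1, the Schaeffer five-term identity holds: L(x) - L(y) + L(y/x) - L((1-x^{-1})/(1-y^{-1})) + L((1-x)/(1-y)) = 0. -/
/-!
With `x` fixed, the five arguments are rational functions of `y`, and since
`L'(t) = -(1/2) (log t / (1 - t) + log (1 - t) / t)` the logarithms in the derivative of the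
left-hand side cancel after expanding `log` of products and quotients. So the left-hand side
is constant for `y ∈ (0, x]`, and at `y = x` it equals `L(1)`, which vanishes because
`∫₀¹ log (1 - t) / t dt = -ζ(2)` (integrate the series of `-log (1 - t) / t` term by term).
-/

open Real

/-- The Rogers dilogarithm (real version):
`L(x) = -π²/6 - (1/2)∫₀ˣ (log t/(1-t) + log(1-t)/t) dt`. -/
noncomputable def rogersL (x : ℝ) : ℝ :=
  -(π ^ 2 / 6) - (1 / 2) * ∫ t in (0:ℝ)..x, (Real.log t / (1 - t) + Real.log (1 - t) / t)

open MeasureTheory Set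

lemma abs_log_le_two_mul_abs_one_sub {t : ℝ} (ht : 1 / 2 ≤ t) : |log t| ≤ 2 * |1 - t| := by
  have ht0 : 0 < t := by linarith
  rcases le_total t 1 with h1 | h1
  · have h := log_le_sub_one_of_pos (inv_pos.2 ht0)
    rw [log_inv, inv_eq_one_div] at h
    rw [abs_of_nonpos (log_nonpos ht0.le h1), abs_of_nonneg (by linarith)]
    have : 1 / t - 1 ≤ 2 * (1 - t) := by
      rw [div_sub_one ht0.ne', div_le_iff₀ ht0]; nlinarith
    linarith
  · rw [abs_of_nonneg (log_nonneg h1), abs_of_nonpos (by linarith)]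
    linarith [log_le_sub_one_of_pos ht0]

lemma abs_log_div_one_sub_le {t : ℝ} (ht : 0 < t) : |log t / (1 - t)| ≤ 2 * |log t| + 2 := by
  rw [abs_div]
  rcases le_or_gt t (1 / 2) with h | h
  · have : 1 / 2 ≤ |1 - t| := by rw [abs_of_pos (by linarith)]; linarith
    rw [div_le_iff₀ (by linarith)]
    nlinarith [abs_nonneg (log t)]
  · rcases eq_or_ne t 1 with rfl | h1
    · simp
    · rw [div_le_iff₀ (abs_pos.2 (sub_ne_zero.2 (Ne.symm h1)))]
      nlinarith [abs_log_le_two_mul_abs_one_sub h.le, abs_nonneg (log t), abs_nonneg (1 - t)]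

lemma intervalIntegrable_log_div_one_sub :
    IntervalIntegrable (fun t => log t / (1 - t)) volume 0 1 := by
  refine ((intervalIntegral.intervalIntegrable_log'.abs.const_mul 2).add
    (intervalIntegrable_const (c := 2))).mono_fun'
    (by fun_prop : Measurable fun t => log t / (1 - t)).aestronglyMeasurable ?_
  rw [uIoc_of_le zero_le_one]
  filter_upwards [ae_restrict_mem measurableSet_Ioc] with t ht
  exact abs_log_div_one_sub_le ht.1

lemma intervalIntegrable_log_one_sub_div :
    IntervalIntegrable (fun t => log (1 - t) / t) volume 0 1 := by
  simpa using (intervalIntegrable_log_div_one_sub.comp_sub_left 1).symm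

noncomputable def rogersIntegrand (t : ℝ) : ℝ := log t / (1 - t) + log (1 - t) / t

lemma intervalIntegrable_rogersIntegrand {u v : ℝ} (hu : u ∈ Icc (0 : ℝ) 1)
    (hv : v ∈ Icc (0 : ℝ) 1) : IntervalIntegrable rogersIntegrand volume u v :=
  (intervalIntegrable_log_div_one_sub.add intervalIntegrable_log_one_sub_div).mono_set <| by
    rw [uIcc_of_le zero_le_one]; exact uIcc_subset_Icc hu hv

lemma continuousOn_rogersIntegrand : ContinuousOn rogersIntegrand (Ioo 0 1) := by
  intro t ht
  have h0 : t ≠ 0 := ht.1.ne'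
  have h1 : 1 - t ≠ 0 := sub_ne_zero.2 ht.2.ne'
  unfold rogersIntegrand
  fun_prop (disch := assumption)

lemma rogersL_eq_integral (u : ℝ) :
    rogersL u = -(π ^ 2 / 6) - (1 / 2) * ∫ t in (0 : ℝ)..u, rogersIntegrand t := rfl

lemma hasDerivAt_rogersL {u : ℝ} (hu : u ∈ Ioo (0 : ℝ) 1) :
    HasDerivAt rogersL (-(1 / 2) * rogersIntegrand u) u := by
  have hint := intervalIntegrable_rogersIntegrand (left_mem_Icc.2 zero_le_one)
    (Ioo_subset_Icc_self hu)
  have hmeas :=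
    continuousOn_rogersIntegrand.stronglyMeasurableAtFilter (μ := volume) isOpen_Ioo u hu
  have hcont := continuousOn_rogersIntegrand.continuousAt (isOpen_Ioo.mem_nhds hu)
  rw [show rogersL = _ from funext rogersL_eq_integral]
  have hprim := intervalIntegral.integral_hasDerivAt_right hint hmeas hcont
  exact ((hprim.const_mul (1 / 2)).const_sub _).congr_deriv (by ring)

lemma continuousOn_rogersL : ContinuousOn rogersL (Icc 0 1) := by
  have h := intervalIntegral.continuousOn_primitive_interval' (intervalIntegrable_rogersIntegrand
    (left_mem_Icc.2 zero_le_one) (right_mem_Icc.2 zero_le_one)) left_mem_uIcc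
  rw [uIcc_of_le zero_le_one] at h
  exact (continuousOn_const.sub (continuousOn_const.mul h)).congr fun u _ => rogersL_eq_integral u

lemma hasSum_one_div_nat_add_one_sq :
    HasSum (fun n : ℕ => 1 / ((n : ℝ) + 1) ^ 2) (π ^ 2 / 6) := by
  simpa using (hasSum_nat_add_iff' 1).2 hasSum_zeta_two

lemma hasSum_pow_div_nat_add_one {t : ℝ} (ht0 : t ≠ 0) (ht : |t| < 1) :
    HasSum (fun n : ℕ => t ^ n / (n + 1)) (-log (1 - t) / t) := by
  have h := (hasSum_pow_div_log_of_abs_lt_one ht).div_const t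
  rwa [show (fun n : ℕ => t ^ (n + 1) / (n + 1) / t) = fun n : ℕ => t ^ n / (n + 1) from
    funext fun n => by rw [pow_succ]; field_simp] at h

lemma integral_pow_div_nat_add_one (n : ℕ) :
    ∫ t in Ioo (0 : ℝ) 1, t ^ n / (n + 1) = 1 / ((n : ℝ) + 1) ^ 2 := by
  rw [← integral_Ioc_eq_integral_Ioo, ← intervalIntegral.integral_of_le zero_le_one,
    intervalIntegral.integral_div, integral_pow]
  field_simp
  simp

lemma integral_log_one_sub_div : ∫ t in (0 : ℝ)..1, log (1 - t) / t = -(π ^ 2 / 6) := by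
  have hseries : EqOn (fun t => log (1 - t) / t) (fun t => -∑' n : ℕ, t ^ n / (n + 1))
      (Ioo 0 1) := fun t ht => by
    dsimp only
    rw [(hasSum_pow_div_nat_add_one ht.1.ne' (by rw [abs_of_pos ht.1]; exact ht.2)).tsum_eq,
      neg_div, neg_neg]
  have hint (n : ℕ) : IntegrableOn (fun t : ℝ => t ^ n / (n + 1)) (Ioo 0 1) :=
    (by fun_prop : Continuous fun t : ℝ => t ^ n / (n + 1)).integrableOn_Icc.mono_set
      Ioo_subset_Icc_self
  have hnorm (n : ℕ) : ∫ t in Ioo (0 : ℝ) 1, ‖t ^ n / (n + 1)‖ = 1 / ((n : ℝ) + 1) ^ 2 := by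
    rw [← integral_pow_div_nat_add_one n]
    refine setIntegral_congr_fun measurableSet_Ioo fun t ht => ?_
    exact Real.norm_of_nonneg (by have := ht.1.le; positivity)
  have hsum := hasSum_integral_of_summable_integral_norm hint
    (by simpa only [hnorm] using hasSum_one_div_nat_add_one_sq.summable)
  rw [intervalIntegral.integral_of_le zero_le_one, integral_Ioc_eq_integral_Ioo,
    setIntegral_congr_fun measurableSet_Ioo hseries, integral_neg, ← hsum.tsum_eq]
  simp only [integral_pow_div_nat_add_one, hasSum_one_div_nat_add_one_sq.tsum_eq]

lemma integral_log_div_one_sub : ∫ t in (0 : ℝ)..1, log t / (1 - t) = -(π ^ 2 / 6) := by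
  have h := intervalIntegral.integral_comp_sub_left (fun t => log (1 - t) / t) (1 : ℝ)
    (a := 0) (b := 1)
  simp only [sub_sub_cancel, sub_self, sub_zero] at h
  rw [h, integral_log_one_sub_div]

lemma rogersL_one : rogersL 1 = 0 := by
  rw [rogersL, intervalIntegral.integral_add intervalIntegrable_log_div_one_sub
    intervalIntegrable_log_one_sub_div, integral_log_div_one_sub, integral_log_one_sub_div]
  ring

noncomputable def schaefferFiveTerm (x z : ℝ) : ℝ :=
  rogersL x - rogersL z + rogersL (z / x) - rogersL (z * (1 - x) / (x * (1 - z)))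
    + rogersL ((1 - x) / (1 - z))

section FiveTerm

variable {x z : ℝ}

-- The last two factors are the derivatives in `z` of the arguments they follow.
lemma rogersIntegrand_five_term (hz : 0 < z) (hzx : z < x) (hx : x < 1) :
    rogersIntegrand z = rogersIntegrand (z / x) / x
      - rogersIntegrand (z * (1 - x) / (x * (1 - z))) * ((1 - x) / (x * (1 - z) ^ 2))
      + rogersIntegrand ((1 - x) / (1 - z)) * ((1 - x) / (1 - z) ^ 2) := by
  have hx0 : 0 < x := hz.trans hzx
  have h1x : 0 < 1 - x := by linarith
  have h1z : 0 < 1 - z := by linarith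
  have hxz : 0 < x - z := by linarith
  have e1 : 1 - z / x = (x - z) / x := by field_simp
  have e2 : 1 - z * (1 - x) / (x * (1 - z)) = (x - z) / (x * (1 - z)) := by field_simp; ring
  have e3 : 1 - (1 - x) / (1 - z) = (x - z) / (1 - z) := by field_simp; ring
  simp only [rogersIntegrand]
  rw [e1, e2, e3, log_div hz.ne' hx0.ne', log_div hxz.ne' hx0.ne',
    log_div (mul_pos hz h1x).ne' (mul_pos hx0 h1z).ne', log_div hxz.ne' (mul_pos hx0 h1z).ne',
    log_div h1x.ne' h1z.ne', log_div hxz.ne' h1z.ne', log_mul hz.ne' h1x.ne',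
    log_mul hx0.ne' h1z.ne']
  field_simp
  ring

lemma hasDerivAt_schaefferFiveTerm (hz : 0 < z) (hzx : z < x) (hx : x < 1) :
    HasDerivAt (schaefferFiveTerm x) 0 z := by
  have hx0 : 0 < x := hz.trans hzx
  have h1x : 0 < 1 - x := by linarith
  have h1z : 0 < 1 - z := by linarith
  have hden : 0 < x * (1 - z) := mul_pos hx0 h1z
  have ha : z / x ∈ Ioo (0 : ℝ) 1 := ⟨div_pos hz hx0, (div_lt_one hx0).2 hzx⟩
  have hb : z * (1 - x) / (x * (1 - z)) ∈ Ioo (0 : ℝ) 1 :=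
    ⟨div_pos (mul_pos hz h1x) hden, (div_lt_one hden).2 (by nlinarith)⟩
  have hc : (1 - x) / (1 - z) ∈ Ioo (0 : ℝ) 1 :=
    ⟨div_pos h1x h1z, (div_lt_one h1z).2 (by linarith)⟩
  have d1 := hasDerivAt_rogersL ⟨hz, hzx.trans hx⟩
  have d2 := (hasDerivAt_rogersL ha).comp z ((hasDerivAt_id z).div_const x)
  have d3 := (hasDerivAt_rogersL hb).comp z
    (((hasDerivAt_id z).mul_const (1 - x)).div (((hasDerivAt_id z).const_sub 1).const_mul x)
      hden.ne')
  have d4 := (hasDerivAt_rogersL hc).comp z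
    ((hasDerivAt_const z (1 - x)).div ((hasDerivAt_id z).const_sub 1) h1z.ne')
  refine (((((hasDerivAt_const z (rogersL x)).sub d1).add d2).sub d3).add d4).congr_deriv ?_
  rw [id, rogersIntegrand_five_term hz hzx hx]
  field_simp
  ring

lemma continuousOn_schaefferFiveTerm (hx : x < 1) :
    ContinuousOn (schaefferFiveTerm x) (Ioc 0 x) := by
  have hL {g : ℝ → ℝ} (hg : ContinuousOn g (Ioc 0 x)) (hmaps : MapsTo g (Ioc 0 x) (Icc 0 1)) :
      ContinuousOn (fun z => rogersL (g z)) (Ioc 0 x) :=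
    continuousOn_rogersL.comp hg hmaps
  have h1z {z : ℝ} (hz : z ∈ Ioc 0 x) : 0 < 1 - z := by linarith [hz.2]
  have hx0 {z : ℝ} (hz : z ∈ Ioc 0 x) : 0 < x := hz.1.trans_le hz.2
  refine (((continuousOn_const.sub (hL continuousOn_id ?_)).add (hL ?_ ?_)).sub
    (hL ?_ ?_)).add (hL ?_ ?_)
  · exact fun z hz => ⟨hz.1.le, hz.2.trans hx.le⟩
  · exact continuousOn_id.div_const x
  · exact fun z hz => ⟨div_nonneg hz.1.le (hx0 hz).le, div_le_one_of_le₀ hz.2 (hx0 hz).le⟩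
  · exact (continuousOn_id.mul continuousOn_const).div
      (continuousOn_const.mul (continuousOn_const.sub continuousOn_id))
      fun z hz => (mul_pos (hx0 hz) (h1z hz)).ne'
  · intro z hz
    have hden := mul_pos (hx0 hz) (h1z hz)
    exact ⟨div_nonneg (mul_nonneg hz.1.le (by linarith)) hden.le,
      div_le_one_of_le₀ (by nlinarith [hz.2]) hden.le⟩
  · exact continuousOn_const.div (continuousOn_const.sub continuousOn_id)
      fun z hz => (h1z hz).ne'
  · exact fun z hz => ⟨div_nonneg (by linarith) (h1z hz).le,
      div_le_one_of_le₀ (by linarith [hz.2]) (h1z hz).le⟩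

lemma schaefferFiveTerm_self (hx0 : x ≠ 0) (hx1 : x ≠ 1) : schaefferFiveTerm x x = 0 := by
  have h1x : 1 - x ≠ 0 := sub_ne_zero.2 hx1.symm
  rw [schaefferFiveTerm, div_self hx0, div_self (mul_ne_zero hx0 h1x), div_self h1x, rogersL_one]
  ring

end FiveTerm

lemma one_sub_inv_div_one_sub_inv {K : Type*} [Field K] {x y : K} (hx : x ≠ 0) (hy : y ≠ 0)
    (hy1 : y ≠ 1) : (1 - x⁻¹) / (1 - y⁻¹) = y * (1 - x) / (x * (1 - y)) := by
  have : 1 - y ≠ 0 := sub_ne_zero.2 hy1.symm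
  field_simp
  ring

/-- The Schaeffer five-term identity for the Rogers dilogarithm: for real
`0 < y < x < 1`,
`L(x) - L(y) + L(y/x) - L((1-x⁻¹)/(1-y⁻¹)) + L((1-x)/(1-y)) = 0`. -/
theorem rogers_schaeffer_identity (x y : ℝ) (hy : 0 < y) (hyx : y < x) (hx : x < 1) :
    rogersL x - rogersL y + rogersL (y / x)
      - rogersL ((1 - x⁻¹) / (1 - y⁻¹)) + rogersL ((1 - x) / (1 - y)) = 0 := by
  have hx0 : 0 < x := hy.trans hyx
  rw [one_sub_inv_div_one_sub_inv hx0.ne' hy.ne' (hyx.trans hx).ne]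
  have hconst := constant_of_has_deriv_right_zero
    ((continuousOn_schaefferFiveTerm hx).mono fun z hz => ⟨hy.trans_le hz.1, hz.2⟩)
    (fun z hz => (hasDerivAt_schaefferFiveTerm (hy.trans_le hz.1) hz.2 hx).hasDerivWithinAt)
    x ⟨hyx.le, le_rfl⟩
  rw [schaefferFiveTerm_self hx0.ne' hx.ne] at hconst
  exact hconst.symm
end

section
/- With N = 2m+1 odd, ζ = exp(2πi/N), and g(x) = ∏_{j=1}^{N-1}(1-xζ^{-j})^{j/N}, the identity g(x)·g(1/x) = c · (g(1)²/N) · x^{(1-N)/2} · (1-x^N)/(1-x) holds for some N-th root of unity c (depending on x), whenever both sides are defined. -/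
/-!
Raising to the `N`-th power removes the branch ambiguity of the fractional powers, so it
suffices to compare `N`-th powers, and `g(y)^N = ∏ₖ (1 - y wᵏ)ᵏ` with `w = ζ⁻¹`.
Writing `1 - y⁻¹ wᵏ = -y⁻¹ wᵏ (1 - y w^(N-k))` and reflecting `k ↦ N - k` turns
`g(y)^N g(1/y)^N` into `y^(-N m)`, times a constant, times `(∏ₖ (1 - y wᵏ))^N`; that product is
`(1 - y^N) / (1 - y)`, and the constant is fixed by `y = 1`, where the product equals `N`.
-/

open Complex Real

/-- `g(x) = ∏_{j=1}^{N-1} (1 - x·ζ^{-j})^{j/N}`, with principal branch powers. -/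
noncomputable def gfun (N : ℕ) (ζ x : ℂ) : ℂ :=
  ∏ j ∈ Finset.range (N - 1), (1 - x * ζ ^ (-((j : ℤ) + 1))) ^ ((((j : ℕ) + 1 : ℕ) : ℂ) / N)

open Finset

theorem exists_pow_eq_one_and_eq_mul_of_pow_eq {G : Type*} [CommGroupWithZero G] {N : ℕ}
    (hN : N ≠ 0) {a b : G} (h : a ^ N = b ^ N) : ∃ c : G, c ^ N = 1 ∧ a = c * b := by
  by_cases hb : b = 0
  · subst hb
    rw [zero_pow hN, pow_eq_zero_iff hN] at h
    exact ⟨1, one_pow N, by rw [h, mul_zero]⟩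
  · exact ⟨a / b, by rw [div_pow, h, div_self (pow_ne_zero N hb)], (div_mul_cancel₀ a hb).symm⟩

theorem sum_range_two_mul_succ (m : ℕ) : ∑ k ∈ range (2 * m), (k + 1) = (2 * m + 1) * m := by
  have h := sum_range_id_mul_two (2 * m + 1)
  rw [sum_range_succ'] at h
  simp only [add_zero, Nat.add_sub_cancel] at h
  nlinarith

section WeightedProd

variable {K : Type*} [Field K] {n : ℕ} {w : K}

theorem IsPrimitiveRoot.prod_one_sub_mul_pow_mul_one_sub (hw : IsPrimitiveRoot w (n + 1))
    (y : K) : (∏ k ∈ range n, (1 - y * w ^ (k + 1))) * (1 - y) = 1 - y ^ (n + 1) := by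
  have hprod : ∏ k ∈ range (n + 1), (1 - y * w ^ k) = 1 - y ^ (n + 1) := by
    rcases eq_or_ne y 0 with rfl | hy
    · simp
    have h := congrArg (Polynomial.eval y⁻¹) (X_pow_sub_C_eq_prod hw n.succ_pos (one_pow (n + 1)))
    simp only [Polynomial.eval_sub, Polynomial.eval_pow, Polynomial.eval_X, Polynomial.eval_C,
      Polynomial.eval_prod, mul_one] at h
    calc ∏ k ∈ range (n + 1), (1 - y * w ^ k)
        = ∏ k ∈ range (n + 1), y * (y⁻¹ - w ^ k) := by
          refine prod_congr rfl fun k _ => ?_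
          rw [mul_sub, mul_inv_cancel₀ hy]
      _ = y ^ (n + 1) * (y⁻¹ ^ (n + 1) - 1) := by rw [prod_mul_distrib, prod_const, card_range, h]
      _ = 1 - y ^ (n + 1) := by rw [mul_sub, ← mul_pow, mul_inv_cancel₀ hy, one_pow, mul_one]
  simpa [prod_range_succ', mul_comm] using hprod

/-- `g(y) ^ N` for `N = n + 1` and `w = ζ⁻¹`. -/
def weightedProd (n : ℕ) (w y : K) : K := ∏ k ∈ range n, (1 - y * w ^ (k + 1)) ^ (k + 1)

theorem weightedProd_mul_weightedProd_inv_of_pow_eq_one (hw : w ^ (n + 1) = 1) {y : K}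
    (hy : y ≠ 0) :
    weightedProd n w y * weightedProd n w y⁻¹ =
      y⁻¹ ^ (∑ k ∈ range n, (k + 1)) * (∏ k ∈ range n, (-w ^ (k + 1)) ^ (k + 1)) *
        (∏ k ∈ range n, (1 - y * w ^ (k + 1))) ^ (n + 1) := by
  have hfactor : ∀ k ∈ range n, (1 - y⁻¹ * w ^ (k + 1)) ^ (k + 1) =
      y⁻¹ ^ (k + 1) * (-w ^ (k + 1)) ^ (k + 1) * (1 - y * w ^ (n - k)) ^ (k + 1) := by
    intro k hk
    have hw' : w ^ (k + 1) * w ^ (n - k) = 1 := by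
      rw [← pow_add, show k + 1 + (n - k) = n + 1 by grind, hw]
    rw [← mul_pow, ← mul_pow]
    congr 1
    linear_combination (-y⁻¹ * y) * hw' - mul_inv_cancel₀ hy
  have hreflect : ∏ k ∈ range n, (1 - y * w ^ (n - k)) ^ (k + 1) =
      ∏ k ∈ range n, (1 - y * w ^ (k + 1)) ^ (n - k) := by
    rw [← prod_range_reflect]
    refine prod_congr rfl fun k hk => ?_
    rw [show n - (n - 1 - k) = k + 1 by grind, show n - 1 - k + 1 = n - k by grind]
  rw [weightedProd, weightedProd, prod_congr rfl hfactor, prod_mul_distrib, prod_mul_distrib,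
    prod_pow_eq_pow_sum, hreflect, ← prod_pow, mul_comm, mul_assoc, ← prod_mul_distrib]
  congr 1
  refine prod_congr rfl fun k hk => ?_
  rw [← pow_add, show n - k + (k + 1) = n + 1 by grind]

theorem IsPrimitiveRoot.weightedProd_mul_weightedProd_inv (hw : IsPrimitiveRoot w (n + 1))
    {y : K} (hy : y ≠ 0) :
    weightedProd n w y * weightedProd n w y⁻¹ * ((n : K) + 1) ^ (n + 1) =
      weightedProd n w 1 ^ 2 * y⁻¹ ^ (∑ k ∈ range n, (k + 1)) *
        (∏ k ∈ range n, (1 - y * w ^ (k + 1))) ^ (n + 1) := by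
  have h1 := weightedProd_mul_weightedProd_inv_of_pow_eq_one hw.pow_eq_one one_ne_zero
  simp only [inv_one, one_pow, one_mul, hw.prod_one_sub_pow_eq_order] at h1
  rw [weightedProd_mul_weightedProd_inv_of_pow_eq_one hw.pow_eq_one hy, sq, h1]
  ring

end WeightedProd

theorem gfun_pow_eq_weightedProd {N : ℕ} (hN : N ≠ 0) (ζ y : ℂ) :
    gfun N ζ y ^ N = weightedProd (N - 1) ζ⁻¹ y := by
  rw [gfun, weightedProd, ← prod_pow]
  refine prod_congr rfl fun j _ => ?_
  rw [← cpow_nat_mul, mul_div_cancel₀ _ (Nat.cast_ne_zero.mpr hN), cpow_natCast,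
    show -((j : ℤ) + 1) = -((j + 1 : ℕ) : ℤ) by push_cast; ring, zpow_neg, zpow_natCast, inv_pow]

/-- For `N = 2m+1` odd and `ζ = exp(2πi/N)`:
`g(x)·g(1/x) = c · (g(1)²/N) · x^{(1-N)/2} · (1-x^N)/(1-x)` for some `N`-th root
of unity `c` (depending on `x`), whenever both sides are defined. -/
theorem gfun_inversion (N m : ℕ) (hN : N = 2 * m + 1)
    (ζ : ℂ) (hζ : ζ = Complex.exp (2 * π * Complex.I / N))
    (x : ℂ) (hx0 : x ≠ 0) (hx1 : x ≠ 1) :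
    ∃ c : ℂ, c ^ N = 1 ∧
      gfun N ζ x * gfun N ζ x⁻¹ =
        c * (gfun N ζ 1 ^ 2 / N) * x ^ ((1 - (N : ℤ)) / 2) * ((1 - x ^ N) / (1 - x)) := by
  have hN0 : N ≠ 0 := by omega
  have hw : IsPrimitiveRoot ζ⁻¹ (2 * m + 1) := hN ▸ hζ ▸ (isPrimitiveRoot_exp N hN0).inv
  have hQ : ∏ k ∈ range (2 * m), (1 - x * ζ⁻¹ ^ (k + 1)) = (1 - x ^ N) / (1 - x) := by
    rw [eq_div_iff (sub_ne_zero.mpr hx1.symm), hw.prod_one_sub_mul_pow_mul_one_sub, hN]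
  have key := hw.weightedProd_mul_weightedProd_inv hx0
  rw [sum_range_two_mul_succ, hQ, ← hN, show 2 * m = N - 1 by omega, ← Nat.cast_add_one,
    Nat.sub_add_cancel (by omega)] at key
  have hpow : (gfun N ζ x * gfun N ζ x⁻¹) ^ N =
      (gfun N ζ 1 ^ 2 / N * x⁻¹ ^ m * ((1 - x ^ N) / (1 - x))) ^ N := by
    rw [mul_pow, mul_pow, mul_pow, div_pow, ← pow_mul, mul_comm 2, pow_mul,
      gfun_pow_eq_weightedProd hN0, gfun_pow_eq_weightedProd hN0, gfun_pow_eq_weightedProd hN0,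
      ← pow_mul, mul_comm m N, div_mul_eq_mul_div, div_mul_eq_mul_div,
      eq_div_iff (pow_ne_zero N (Nat.cast_ne_zero.mpr hN0)), key]
  have hexp : x ^ ((1 - (N : ℤ)) / 2) = x⁻¹ ^ m := by
    rw [show (1 - (N : ℤ)) / 2 = -(m : ℤ) by omega, zpow_neg, zpow_natCast, inv_pow]
  obtain ⟨c, hc, h⟩ := exists_pow_eq_one_and_eq_mul_of_pow_eq hN0 hpow
  exact ⟨c, hc, by rw [h, hexp]; ring⟩
end

section
/- Let N be an odd positive integer, ζ = exp(2πi/N), and for x, z ∈ ℂ with x^N + z^N = 1 define S(x|z) = Σ_{k=1}^{N} ∏_{j=1}^{k} z/(1 - xζ^j). Then x · S(x | zζ) = (1-z) · S(x | z) whenever both sides are defined (in particular x ≠ ζ^{-j} for all j). -/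
open Complex Real

/-- `S(x|z) = Σ_{k=1}^{N} ∏_{j=1}^{k} z/(1 - xζ^j)`, a rational function on the
Fermat curve `x^N + z^N = 1`. -/
noncomputable def Sfun (N : ℕ) (ζ x z : ℂ) : ℂ :=
  ∑ k ∈ Finset.range N, ∏ j ∈ Finset.range (k + 1), z / (1 - x * ζ ^ (j + 1))

/-!
Put `f m = ∏_{j<m} z / (1 - x ζ^(j+1))`, so that `S(x|z) = Σ_{k<N} f (k+1)` and, as the
`j`-th factor of `f (k+1)` clears the `j`-th denominator, `x ζ^(k+1) f (k+1) = f (k+1) - z f k`.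
Since replacing `z` by `zζ` multiplies `f (k+1)` by `ζ^(k+1)`, summing this telescopes to
`x S(x|zζ) = (1 - z) S(x|z) + z (f N - 1)`. On the Fermat curve the product of all
denominators is `1 - x^N = z^N`, hence `f N = 1` unless `z = 0`, and the error term vanishes.
-/

open Finset

theorem IsPrimitiveRoot.prod_one_sub_mul_pow_succ {R : Type*} [CommRing R] [IsDomain R]
    {ζ : R} {n : ℕ} (hζ : IsPrimitiveRoot ζ n) (hn : 0 < n) (x : R) :
    ∏ j ∈ range n, (1 - x * ζ ^ (j + 1)) = 1 - x ^ n := by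
  have h := congrArg (Polynomial.eval 1) (X_pow_sub_C_eq_prod hζ hn (rfl : x ^ n = x ^ n))
  simp only [Polynomial.eval_sub, Polynomial.eval_pow, Polynomial.eval_X, Polynomial.eval_C,
    Polynomial.eval_prod, one_pow] at h
  obtain ⟨m, rfl⟩ := Nat.exists_eq_add_of_lt hn
  rw [h, prod_range_succ, hζ.pow_eq_one, prod_range_succ', pow_zero]
  simp only [mul_comm x]

section Telescoping

variable {K : Type*} [Field K]

theorem mul_prod_div_one_sub_succ {a : ℕ → K} (ha : ∀ j, 1 - a j ≠ 0) (z : K) (k : ℕ) :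
    a k * ∏ j ∈ range (k + 1), z / (1 - a j) =
      ∏ j ∈ range (k + 1), z / (1 - a j) - z * ∏ j ∈ range k, z / (1 - a j) := by
  rw [prod_range_succ]
  field_simp [ha k]
  ring

theorem sum_mul_prod_div_one_sub {a : ℕ → K} (ha : ∀ j, 1 - a j ≠ 0) (z : K) (N : ℕ) :
    ∑ k ∈ range N, a k * ∏ j ∈ range (k + 1), z / (1 - a j) =
      (1 - z) * ∑ k ∈ range N, ∏ j ∈ range (k + 1), z / (1 - a j) +
        z * (∏ j ∈ range N, z / (1 - a j) - 1) := by
  have hshift := (sum_range_succ (fun m => ∏ j ∈ range m, z / (1 - a j)) N).symm.trans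
    (sum_range_succ' (fun m => ∏ j ∈ range m, z / (1 - a j)) N)
  simp only [mul_prod_div_one_sub_succ ha, sum_sub_distrib, ← mul_sum]
  rw [prod_range_zero] at hshift
  linear_combination (-z) * hshift

end Telescoping

theorem mul_Sfun_mul_eq (N : ℕ) (ζ x z : ℂ) (hden : ∀ j : ℕ, 1 - x * ζ ^ (j + 1) ≠ 0) :
    x * Sfun N ζ x (z * ζ) = (1 - z) * Sfun N ζ x z +
      z * (∏ j ∈ range N, z / (1 - x * ζ ^ (j + 1)) - 1) := by
  have hfactor : ∀ k : ℕ, x * ∏ j ∈ range (k + 1), z * ζ / (1 - x * ζ ^ (j + 1)) =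
      x * ζ ^ (k + 1) * ∏ j ∈ range (k + 1), z / (1 - x * ζ ^ (j + 1)) := fun k => by
    simp only [mul_div_right_comm z ζ, prod_mul_distrib, prod_const, card_range]
    ring
  rw [Sfun, Sfun, mul_sum]
  simp only [hfactor]
  exact sum_mul_prod_div_one_sub hden z N

theorem Sfun_shift_z_general (N : ℕ)
    (ζ : ℂ) (hζ : ζ = Complex.exp (2 * π * Complex.I / N))
    (x z : ℂ) (hcurve : x ^ N + z ^ N = 1)
    (hden : ∀ j : ℕ, 1 - x * ζ ^ j ≠ 0) :
    x * Sfun N ζ x (z * ζ) = (1 - z) * Sfun N ζ x z := by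
  rcases N.eq_zero_or_pos with rfl | hN
  · simp [Sfun]
  have hprim : IsPrimitiveRoot ζ N := hζ ▸ Complex.isPrimitiveRoot_exp N hN.ne'
  have hlast : ∏ j ∈ range N, z / (1 - x * ζ ^ (j + 1)) = z ^ N / z ^ N := by
    rw [prod_div_distrib, prod_const, card_range, hprim.prod_one_sub_mul_pow_succ hN,
      ← hcurve, add_sub_cancel_left]
  rw [mul_Sfun_mul_eq N ζ x z fun j => hden (j + 1), hlast]
  rcases eq_or_ne z 0 with rfl | hz
  · simp
  · simp [div_self (pow_ne_zero N hz)]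

/-- For `N` odd, `ζ = exp(2πi/N)`, and `x^N + z^N = 1`:
`x · S(x | zζ) = (1-z) · S(x | z)` whenever the denominators are nonzero. -/
theorem Sfun_shift_z (N : ℕ) (hN : Odd N)
    (ζ : ℂ) (hζ : ζ = Complex.exp (2 * π * Complex.I / N))
    (x z : ℂ) (hcurve : x ^ N + z ^ N = 1)
    (hden : ∀ j : ℕ, 1 - x * ζ ^ j ≠ 0) :
    x * Sfun N ζ x (z * ζ) = (1 - z) * Sfun N ζ x z :=
  Sfun_shift_z_general N ζ hζ x z hcurve hden
end

section
/- Let N be odd, ζ = exp(2πi/N), and x ∈ ℂ with x^N ≠ 1. Then Σ_{j=0}^{N-1} ζ^j/(1 - xζ^j) = N·x^{N-1}/(1 - x^N). Consequently, f(x, xζ^{-1} | ζ) := Σ_{s=0}^{N-1} ∏_{j=1}^{s} ((1-xζ^{j-1})/(1-xζ^j)) ζ^s = N x^{N-1}(1-x)/(1-x^N). -/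
/-!
Multiplying by `1 - x^N`, each term `ζ^j / (1 - xζ^j)` becomes the finite geometric series
`Σ_k x^k ζ^{j(k+1)}`. Summing over `j` first, orthogonality of the `N`-th roots of unity kills every
`k` except `k = N - 1`, which contributes `N x^{N-1}`. In the second sum the product telescopes to
`(1 - x) / (1 - xζ^s)`, so it is `(1 - x)` times the first.
-/

open Complex Real

open Finset

variable {K : Type*} [Field K] {N : ℕ} {ζ x : K}

theorem mul_pow_pow_eq_pow (hζ : ζ ^ N = 1) (j : ℕ) : (x * ζ ^ j) ^ N = x ^ N := by
  rw [mul_pow, ← pow_mul, mul_comm j, pow_mul, hζ, one_pow, mul_one]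

theorem one_sub_mul_pow_ne_zero (hζ : ζ ^ N = 1) (hx : x ^ N ≠ 1) (j : ℕ) :
    1 - x * ζ ^ j ≠ 0 := by
  intro h
  rw [← mul_pow_pow_eq_pow hζ j, ← sub_eq_zero.mp h, one_pow] at hx
  exact hx rfl

theorem IsPrimitiveRoot.geom_sum_pow_eq_zero (hζ : IsPrimitiveRoot ζ N) {m : ℕ} (hm0 : 0 < m)
    (hmN : m < N) : ∑ j ∈ range N, (ζ ^ m) ^ j = 0 := by
  have hne : ζ ^ m - 1 ≠ 0 := sub_ne_zero.mpr (hζ.pow_ne_one_of_pos_of_lt hm0.ne' hmN)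
  refine (mul_eq_zero.mp ?_).resolve_right hne
  rw [geom_sum_mul, ← pow_mul, mul_comm, pow_mul, hζ.pow_eq_one, one_pow, sub_self]

theorem pow_div_one_sub_mul_pow_mul (hζ : ζ ^ N = 1) (hx : x ^ N ≠ 1) (j : ℕ) :
    ζ ^ j / (1 - x * ζ ^ j) * (1 - x ^ N) = ∑ k ∈ range N, x ^ k * (ζ ^ (k + 1)) ^ j := by
  rw [← mul_pow_pow_eq_pow hζ j, ← mul_neg_geom_sum, div_mul_eq_mul_div, mul_div_assoc,
    mul_div_cancel_left₀ _ (one_sub_mul_pow_ne_zero hζ hx j), mul_sum]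
  refine sum_congr rfl fun k _ => ?_
  ring

theorem IsPrimitiveRoot.sum_pow_div_one_sub_mul_pow_mul (hζ : IsPrimitiveRoot ζ N)
    (hx : x ^ N ≠ 1) :
    (∑ j ∈ range N, ζ ^ j / (1 - x * ζ ^ j)) * (1 - x ^ N) = N * x ^ (N - 1) := by
  obtain ⟨n, rfl⟩ : ∃ n, N = n + 1 :=
    Nat.exists_eq_succ_of_ne_zero (by rintro rfl; exact hx (pow_zero x))
  have hvanish : ∀ k ∈ range n, x ^ k * ∑ j ∈ range (n + 1), (ζ ^ (k + 1)) ^ j = 0 :=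
    fun k hk => by rw [hζ.geom_sum_pow_eq_zero k.succ_pos (by simpa using hk), mul_zero]
  rw [sum_mul, sum_congr rfl fun j _ => pow_div_one_sub_mul_pow_mul hζ.pow_eq_one hx j, sum_comm]
  simp_rw [← mul_sum]
  rw [sum_range_succ, sum_eq_zero hvanish, hζ.pow_eq_one]
  simp [mul_comm]

theorem prod_range_one_sub_mul_pow_div (hζ : ζ ^ N = 1) (hx : x ^ N ≠ 1) (s : ℕ) :
    ∏ j ∈ range s, (1 - x * ζ ^ j) / (1 - x * ζ ^ (j + 1)) = (1 - x) / (1 - x * ζ ^ s) := by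
  have := congrArg Units.val
    (prod_range_div' (fun j => Units.mk0 _ (one_sub_mul_pow_ne_zero hζ hx j)) s)
  simpa using this

theorem sum_zeta_over_one_sub_general (N : ℕ)
    (ζ : ℂ) (hζ : ζ = Complex.exp (2 * π * Complex.I / N))
    (x : ℂ) (hx : x ^ N ≠ 1) :
    (∑ j ∈ Finset.range N, ζ ^ j / (1 - x * ζ ^ j)) =
      (N : ℂ) * x ^ (N - 1) / (1 - x ^ N) ∧
    (∑ s ∈ Finset.range N,
        (∏ j ∈ Finset.range s, (1 - x * ζ ^ j) / (1 - x * ζ ^ (j + 1))) * ζ ^ s) =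
      (N : ℂ) * x ^ (N - 1) * (1 - x) / (1 - x ^ N) := by
  have hprim : IsPrimitiveRoot ζ N := by
    rw [hζ]
    exact Complex.isPrimitiveRoot_exp N (by rintro rfl; exact hx (pow_zero x))
  have first : ∑ j ∈ range N, ζ ^ j / (1 - x * ζ ^ j) = N * x ^ (N - 1) / (1 - x ^ N) := by
    rw [eq_div_iff (sub_ne_zero.mpr hx.symm)]
    exact hprim.sum_pow_div_one_sub_mul_pow_mul hx
  refine ⟨first, ?_⟩
  simp_rw [prod_range_one_sub_mul_pow_div hprim.pow_eq_one hx, div_mul_eq_mul_div, mul_div_assoc,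
    ← mul_sum, first]
  ring

/-- For `N` odd, `ζ = exp(2πi/N)` and `x^N ≠ 1`:
`Σ_{j=0}^{N-1} ζ^j/(1-xζ^j) = N·x^{N-1}/(1-x^N)`, and consequently
`f(x, xζ^{-1} | ζ) = Σ_{s=0}^{N-1} ∏_{j=1}^{s} ((1-xζ^{j-1})/(1-xζ^j)) ζ^s
  = N·x^{N-1}(1-x)/(1-x^N)`. -/
theorem sum_zeta_over_one_sub (N : ℕ) (hN : Odd N)
    (ζ : ℂ) (hζ : ζ = Complex.exp (2 * π * Complex.I / N))
    (x : ℂ) (hx : x ^ N ≠ 1) :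
    (∑ j ∈ Finset.range N, ζ ^ j / (1 - x * ζ ^ j)) =
      (N : ℂ) * x ^ (N - 1) / (1 - x ^ N) ∧
    (∑ s ∈ Finset.range N,
        (∏ j ∈ Finset.range s, (1 - x * ζ ^ j) / (1 - x * ζ ^ (j + 1))) * ζ ^ s) =
      (N : ℂ) * x ^ (N - 1) * (1 - x) / (1 - x ^ N) :=
  sum_zeta_over_one_sub_general N ζ hζ x hx
end
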